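/- arXiv:1210.0056 — 6 statements merged into one kernel-verified Lean document; each statement's English description precedes it below -/
import Mathlib

section
/- Let I ≥ 2 and let W : ℕ → Matrix (Fin I) (Fin I) ℝ be a sequence of symmetric doubly stochastic matrices. Suppose there exists η ∈ (0,1) such that for every ℓ: (W ℓ)_{ii} ≥ η for all i, and for all i ≠ j either (W ℓ)_{ij} = 0 or (W ℓ)_{ij} ≥ η. Define the edge set M_∞ = { {i,j} : i ≠ j and (W ℓ)_{ij} > 0 for infinitely many ℓ }, and assume: (a) the simple graph on Fin I with edge set M_∞ is connected; (b) there exists an integer L ≥ 1 such that for every {i,j} ∈ M_∞ and every ℓ, there is ℓ' with ℓ ≤ ℓ' < ℓ + L and (W ℓ')_{ij} > 0. Set L₀ = (I−1)·L and λ_η = (1 − η^{L₀})^{1/L₀} ∈ (0,1). Then for every ℓ and all i, j ∈ Fin I, the entries of the product P(ℓ) = W(ℓ)·W(ℓ−1)⋯W(0) satisfy |P(ℓ)_{ij} − 1/I| ≤ 2·((1 + η^{−L₀})/(1 − η^{L₀}))·λ_η^ℓ. -/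
open Matrix

/-- A real square matrix is doubly stochastic if its entries are nonnegative
and all row and column sums equal 1. -/
def IsDoublyStochastic {I : ℕ} (P : Matrix (Fin I) (Fin I) ℝ) : Prop :=
  (∀ i j, 0 ≤ P i j) ∧ (∀ i, ∑ j, P i j = 1) ∧ (∀ j, ∑ i, P i j = 1)

/-- The backward product `P(ℓ) = W(ℓ) ⬝ W(ℓ-1) ⋯ W(0)`. -/
def gossipProd {I : ℕ} (W : ℕ → Matrix (Fin I) (Fin I) ℝ) :
    ℕ → Matrix (Fin I) (Fin I) ℝ
  | 0 => W 0
  | (ℓ + 1) => W (ℓ + 1) * gossipProd W ℓ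

namespace GossipAux

variable {I : ℕ}

/-- Block product `blk W s n = W (s+n-1) * ⋯ * W s`. -/
def blk (W : ℕ → Matrix (Fin I) (Fin I) ℝ) (s : ℕ) : ℕ → Matrix (Fin I) (Fin I) ℝ
  | 0 => 1
  | n + 1 => W (s + n) * blk W s n

lemma blk_add (W : ℕ → Matrix (Fin I) (Fin I) ℝ) (s m n : ℕ) :
    blk W s (m + n) = blk W (s + m) n * blk W s m := by
  induction n with
  | zero => simp [blk]
  | succ n ih =>
      have h1 : m + (n + 1) = (m + n) + 1 := by omega
      rw [h1]
      show W (s + (m + n)) * blk W s (m + n) = _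
      rw [ih]
      show _ = (W (s + m + n) * blk W (s + m) n) * blk W s m
      rw [Matrix.mul_assoc, show s + (m + n) = s + m + n by omega]

lemma gossipProd_eq_blk (W : ℕ → Matrix (Fin I) (Fin I) ℝ) (ℓ : ℕ) :
    gossipProd W ℓ = blk W 0 (ℓ + 1) := by
  induction ℓ with
  | zero => simp [gossipProd, blk]
  | succ ℓ ih =>
      rw [gossipProd, ih]
      show _ = W (0 + (ℓ + 1)) * blk W 0 (ℓ + 1)
      rw [Nat.zero_add]

lemma ds_one : IsDoublyStochastic (1 : Matrix (Fin I) (Fin I) ℝ) := by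
  refine ⟨fun i j => ?_, fun i => ?_, fun j => ?_⟩
  · by_cases h : i = j <;> simp [Matrix.one_apply, h]
  · simp [Matrix.one_apply]
  · simp [Matrix.one_apply]

lemma ds_mul {A B : Matrix (Fin I) (Fin I) ℝ} (hA : IsDoublyStochastic A)
    (hB : IsDoublyStochastic B) : IsDoublyStochastic (A * B) := by
  obtain ⟨hA0, hAr, hAc⟩ := hA
  obtain ⟨hB0, hBr, hBc⟩ := hB
  refine ⟨fun i j => ?_, fun i => ?_, fun j => ?_⟩
  · rw [Matrix.mul_apply]
    exact Finset.sum_nonneg fun k _ => mul_nonneg (hA0 i k) (hB0 k j)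
  · simp only [Matrix.mul_apply]
    rw [Finset.sum_comm]
    simp_rw [← Finset.mul_sum, hBr]
    simpa using hAr i
  · simp only [Matrix.mul_apply]
    rw [Finset.sum_comm]
    simp_rw [← Finset.sum_mul, hAc, one_mul]
    exact hBc j

lemma mul_entry_le {A B : Matrix (Fin I) (Fin I) ℝ} (hA : ∀ i j, 0 ≤ A i j)
    (hB : ∀ i j, 0 ≤ B i j) (i k j : Fin I) : A i k * B k j ≤ (A * B) i j := by
  rw [Matrix.mul_apply]
  exact Finset.single_le_sum (f := fun k => A i k * B k j)
    (fun k _ => mul_nonneg (hA i k) (hB k j)) (Finset.mem_univ k)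

end GossipAux

open GossipAux

/-- geometric convergence of products of time-varying symmetric
doubly stochastic weight matrices to the uniform averaging matrix. -/
theorem gossip_product_geometric_convergence {I : ℕ} (hI : 2 ≤ I)
    (W : ℕ → Matrix (Fin I) (Fin I) ℝ)
    (hsymm : ∀ ℓ, (W ℓ).IsSymm)
    (hds : ∀ ℓ, IsDoublyStochastic (W ℓ))
    (η : ℝ) (hη0 : 0 < η) (hη1 : η < 1)
    (hdiag : ∀ ℓ i, η ≤ W ℓ i i)
    (hoff : ∀ ℓ i j, i ≠ j → W ℓ i j = 0 ∨ η ≤ W ℓ i j)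
    (hconn : (SimpleGraph.fromRel
      (fun i j : Fin I => {ℓ : ℕ | 0 < W ℓ i j}.Infinite)).Connected)
    (L : ℕ) (hL : 1 ≤ L)
    (hfreq : ∀ i j : Fin I, i ≠ j → {ℓ : ℕ | 0 < W ℓ i j}.Infinite →
      ∀ ℓ : ℕ, ∃ ℓ', ℓ ≤ ℓ' ∧ ℓ' < ℓ + L ∧ 0 < W ℓ' i j)
    (L₀ : ℕ) (hL₀ : L₀ = (I - 1) * L)
    (lam : ℝ) (hlam : lam = (1 - η ^ L₀) ^ ((1 : ℝ) / L₀)) :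
    ∀ ℓ (i j : Fin I),
      |gossipProd W ℓ i j - 1 / I| ≤
        2 * ((1 + η ^ (-(L₀ : ℤ))) / (1 - η ^ L₀)) * lam ^ ℓ := by
  -- basic numeric facts
  have hL₀pos : 0 < L₀ := by
    rw [hL₀]; exact Nat.mul_pos (by omega) (by omega)
  have hηL : 0 < η ^ L₀ := pow_pos hη0 L₀
  have hηL1 : η ^ L₀ < 1 := pow_lt_one₀ hη0.le hη1 hL₀pos.ne'
  have hq0 : (0:ℝ) < 1 - η ^ L₀ := by linarith
  have hq1 : (1:ℝ) - η ^ L₀ < 1 := by linarith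
  -- blocks are doubly stochastic
  have dsblk : ∀ s n, IsDoublyStochastic (blk W s n) := by
    intro s n
    induction n with
    | zero => exact ds_one
    | succ n ih => exact ds_mul (hds (s + n)) ih
  have blk0 : ∀ s n (i j : Fin I), 0 ≤ blk W s n i j := fun s n i j => (dsblk s n).1 i j
  have blk_le_one : ∀ s n (i j : Fin I), blk W s n i j ≤ 1 := by
    intro s n i j
    have h := (dsblk s n).2.1 i
    calc blk W s n i j ≤ ∑ k, blk W s n i k :=
          Finset.single_le_sum (fun k _ => blk0 s n i k) (Finset.mem_univ j)
      _ = 1 := h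
  -- positive entry of W is at least η
  have Wge : ∀ ℓ (i j : Fin I), 0 < W ℓ i j → η ≤ W ℓ i j := by
    intro ℓ i j h
    by_cases hij : i = j
    · subst hij; exact hdiag ℓ i
    · rcases hoff ℓ i j hij with h0 | h1
      · exact absurd h0 (by linarith)
      · exact h1
  -- positive block entries are at least η^n
  have blk_ge : ∀ n s (i j : Fin I), 0 < blk W s n i j → η ^ n ≤ blk W s n i j := by
    intro n
    induction n with
    | zero =>
        intro s i j h
        by_cases hij : i = j
        · subst hij; simp [blk, Matrix.one_apply]
        · exfalso; have : blk W s 0 i j = 0 := by simp [blk, Matrix.one_apply, hij]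
          rw [this] at h; exact lt_irrefl 0 h
    | succ n ih =>
        intro s i j h
        have hexp : blk W s (n+1) i j = ∑ k, W (s + n) i k * blk W s n k j := by
          show (W (s+n) * blk W s n) i j = _
          rw [Matrix.mul_apply]
        rw [hexp] at h ⊢
        have hnn : ∀ k ∈ Finset.univ, 0 ≤ W (s+n) i k * blk W s n k j :=
          fun k _ => mul_nonneg ((hds (s+n)).1 i k) (blk0 s n k j)
        obtain ⟨k, -, hk⟩ := Finset.exists_lt_of_sum_lt (by simpa using h : ∑ k : Fin I, (0:ℝ) < ∑ k, W (s + n) i k * blk W s n k j)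
        have hWk : 0 < W (s+n) i k := by
          by_contra hc
          push_neg at hc
          have : W (s+n) i k = 0 := le_antisymm hc ((hds (s+n)).1 i k)
          rw [this, zero_mul] at hk; exact absurd hk (lt_irrefl 0)
        have hBk : 0 < blk W s n k j := by
          by_contra hc
          push_neg at hc
          have : blk W s n k j = 0 := le_antisymm hc (blk0 s n k j)
          rw [this, mul_zero] at hk; exact absurd hk (lt_irrefl 0)
        calc η ^ (n+1) = η * η ^ n := by ring
          _ ≤ W (s+n) i k * blk W s n k j :=
              mul_le_mul (Wge _ _ _ hWk) (ih s k j hBk) (pow_nonneg hη0.le n) ((hds _).1 i k)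
          _ ≤ ∑ k, W (s + n) i k * blk W s n k j :=
              Finset.single_le_sum hnn (Finset.mem_univ k)
  -- diagonal entries of blocks are positive
  have blk_diag : ∀ s n (i : Fin I), 0 < blk W s n i i := by
    intro s n
    induction n with
    | zero => intro i; simp [blk, Matrix.one_apply]
    | succ n ih =>
        intro i
        have h := mul_entry_le (A := W (s+n)) (B := blk W s n)
          ((hds (s+n)).1) (blk0 s n) i i i
        have : 0 < W (s+n) i i * blk W s n i i :=
          mul_pos (lt_of_lt_of_le hη0 (hdiag (s+n) i)) (ih i)
        exact lt_of_lt_of_le this h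
  -- positivity is preserved as the block grows
  have blk_pos_mono : ∀ s n m (i j : Fin I), 0 < blk W s n i j → 0 < blk W s (n + m) i j := by
    intro s n m i j h
    rw [blk_add]
    exact lt_of_lt_of_le (mul_pos (blk_diag (s+n) m i) h)
      (mul_entry_le (blk0 (s+n) m) (blk0 s n) i i j)
  -- a positive W entry inside the window gives a positive block entry
  have blk_pos_of_W : ∀ s n t (i j : Fin I), s ≤ t → t < s + n → 0 < W t i j →
      0 < blk W s n i j := by
    intro s n t i j hst htn h
    have h1 : 0 < blk W s (t - s + 1) i j := by
      have : blk W s (t - s + 1) = W (s + (t - s)) * blk W s (t - s) := rfl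
      rw [this, show s + (t - s) = t by omega]
      exact lt_of_lt_of_le (mul_pos h (blk_diag s (t-s) j))
        (mul_entry_le (fun a b => (hds t).1 a b) (blk0 s (t-s)) i j j)
    have h2 := blk_pos_mono s (t - s + 1) (n - (t - s + 1)) i j h1
    rwa [show t - s + 1 + (n - (t - s + 1)) = n by omega] at h2
  -- all entries of an L₀-block are positive
  have blkpos : ∀ s (i j : Fin I), 0 < blk W s L₀ i j := by
    intro s i j
    -- the set of rows i with positive (i,j) entry after m windows of length L
    set T : ℕ → Finset (Fin I) :=
      fun m => Finset.univ.filter (fun a => 0 < blk W s (m * L) a j) with hT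
    have hTmono : ∀ m, T m ⊆ T (m + 1) := by
      intro m a ha
      rw [hT, Finset.mem_filter] at ha ⊢
      refine ⟨Finset.mem_univ a, ?_⟩
      have := blk_pos_mono s (m * L) L a j ha.2
      rwa [show m * L + L = (m + 1) * L by ring] at this
    have key : ∀ m, min (m + 1) I ≤ (T m).card := by
      intro m
      induction m with
      | zero =>
          have hj : j ∈ T 0 := by
            rw [hT, Finset.mem_filter]
            exact ⟨Finset.mem_univ j, by simpa using blk_diag s 0 j⟩
          have := Finset.card_pos.mpr ⟨j, hj⟩
          omega
      | succ m ih =>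
          by_cases hTu : T m = Finset.univ
          · have h2 : Finset.univ ⊆ T (m+1) := hTu ▸ hTmono m
            have : T (m+1) = Finset.univ := Finset.univ_subset_iff.mp h2
            rw [this, Finset.card_univ, Fintype.card_fin]
            omega
          · -- find a boundary dart
            obtain ⟨b, hb⟩ : ∃ b : Fin I, b ∉ T m := by
              by_contra hc
              push_neg at hc
              exact hTu (Finset.eq_univ_iff_forall.mpr hc)
            have hjT : j ∈ T m := by
              rw [hT, Finset.mem_filter]
              exact ⟨Finset.mem_univ j, blk_diag s (m*L) j⟩
            obtain ⟨p⟩ := hconn.preconnected j b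
            obtain ⟨d, -, hdS, hdnS⟩ := p.exists_boundary_dart (↑(T m) : Set (Fin I))
              (by simpa using hjT) (by simpa using hb)
            have hadj := d.adj
            rw [SimpleGraph.fromRel_adj] at hadj
            obtain ⟨hne, hrel⟩ := hadj
            have hWeq : ∀ ℓ', W ℓ' d.fst d.snd = W ℓ' d.snd d.fst :=
              fun ℓ' => ((hsymm ℓ').apply d.fst d.snd).symm
            have hinf : {ℓ' : ℕ | 0 < W ℓ' d.snd d.fst}.Infinite := by
              rcases hrel with h1 | h1
              · have : {ℓ' : ℕ | 0 < W ℓ' d.fst d.snd} = {ℓ' : ℕ | 0 < W ℓ' d.snd d.fst} := by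
                  ext ℓ'; simp [hWeq ℓ']
                rwa [this] at h1
              · exact h1
            obtain ⟨ℓ', hℓ1, hℓ2, hℓ3⟩ := hfreq d.snd d.fst hne.symm hinf (s + m * L)
            have hC : 0 < blk W (s + m * L) L d.snd d.fst :=
              blk_pos_of_W (s + m * L) L ℓ' d.snd d.fst hℓ1 hℓ2 hℓ3
            have hfstT : 0 < blk W s (m * L) d.fst j := by
              have := hdS
              simp only [Finset.coe_filter, Set.mem_setOf_eq, hT] at this
              exact this.2
            have hbT : d.snd ∈ T (m + 1) := by
              rw [hT, Finset.mem_filter]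
              refine ⟨Finset.mem_univ _, ?_⟩
              have heq : (m + 1) * L = m * L + L := by ring
              rw [heq, blk_add]
              exact lt_of_lt_of_le (mul_pos hC hfstT)
                (mul_entry_le (blk0 (s + m*L) L) (blk0 s (m*L)) d.snd d.fst j)
            have hbnT : d.snd ∉ T m := by simpa using hdnS
            have hss : T m ⊂ T (m + 1) :=
              Finset.ssubset_iff_of_subset (hTmono m) |>.mpr ⟨d.snd, hbT, hbnT⟩
            have := Finset.card_lt_card hss
            omega
    have hcard := key (I - 1)
    have hImin : min (I - 1 + 1) I = I := by omega
    rw [hImin] at hcard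
    have hTcard : (T (I-1)).card = I := le_antisymm (by
      simpa using Finset.card_le_card (Finset.subset_univ (T (I-1)))) hcard
    have hTuniv : T (I - 1) = Finset.univ :=
      Finset.eq_univ_of_card _ (by rw [hTcard, Fintype.card_fin])
    have : i ∈ T (I - 1) := hTuniv ▸ Finset.mem_univ i
    rw [hT, Finset.mem_filter] at this
    rw [hL₀]
    exact this.2
  have blkge : ∀ s (i j : Fin I), η ^ L₀ ≤ blk W s L₀ i j :=
    fun s i j => blk_ge L₀ s i j (blkpos s i j)
  -- fix the target column and set up max/min of columns of the running product
  intro ℓ i j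
  have hFin : (Finset.univ : Finset (Fin I)).Nonempty := ⟨i, Finset.mem_univ i⟩
  set f : ℕ → Fin I → ℝ := fun n k => blk W 0 n k j with hf
  set Mx : ℕ → ℝ := fun n => Finset.univ.sup' hFin (f n) with hMxdef
  set mn : ℕ → ℝ := fun n => Finset.univ.inf' hFin (f n) with hmndef
  have hmnMx : ∀ n, mn n ≤ Mx n := fun n =>
    le_trans (Finset.inf'_le _ (Finset.mem_univ i)) (Finset.le_sup' _ (Finset.mem_univ i))
  have hfexp : ∀ n m (k : Fin I), f (n + m) k = ∑ a, blk W n m k a * f n a := by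
    intro n m k
    show blk W 0 (n + m) k j = _
    rw [blk_add, Nat.zero_add, Matrix.mul_apply]
  -- Dobrushin-type contraction estimate
  have contract : ∀ n m (δ : ℝ), 0 ≤ δ → (∀ a b : Fin I, δ ≤ blk W n m a b) →
      Mx (n + m) - mn (n + m) ≤ (1 - δ) * (Mx n - mn n) := by
    intro n m δ hδ hδle
    obtain ⟨q', -, hq'⟩ := Finset.exists_mem_eq_inf' hFin (f n)
    obtain ⟨p', -, hp'⟩ := Finset.exists_mem_eq_sup' hFin (f n)
    have hrow : ∀ k : Fin I, ∑ a, blk W n m k a = 1 := (dsblk n m).2.1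
    have hub : ∀ k : Fin I, f (n + m) k ≤ Mx n - δ * (Mx n - mn n) := by
      intro k
      rw [hfexp]
      have hsplit : blk W n m k q' * f n q'
          + ∑ a ∈ Finset.univ.erase q', blk W n m k a * f n a
          = ∑ a, blk W n m k a * f n a :=
        Finset.add_sum_erase Finset.univ (fun a => blk W n m k a * f n a) (Finset.mem_univ q')
      have hrowe : ∑ a ∈ Finset.univ.erase q', blk W n m k a = 1 - blk W n m k q' := by
        have h := Finset.add_sum_erase Finset.univ (fun a => blk W n m k a) (Finset.mem_univ q')
        rw [hrow k] at h
        linarith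
      have h1 : ∑ a ∈ Finset.univ.erase q', blk W n m k a * f n a
          ≤ (1 - blk W n m k q') * Mx n := by
        rw [← hrowe, Finset.sum_mul]
        refine Finset.sum_le_sum fun a _ => ?_
        exact mul_le_mul_of_nonneg_left (Finset.le_sup' (f n) (Finset.mem_univ a)) (blk0 n m k a)
      have h2 : f n q' = mn n := hq'.symm
      rw [h2] at hsplit
      have hδk : δ ≤ blk W n m k q' := hδle k q'
      have hS : mn n ≤ Mx n := hmnMx n
      nlinarith [hsplit, h1, mul_nonneg (sub_nonneg.mpr hδk) (sub_nonneg.mpr hS)]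
    have hlb : ∀ k : Fin I, mn n + δ * (Mx n - mn n) ≤ f (n + m) k := by
      intro k
      rw [hfexp]
      have hsplit : blk W n m k p' * f n p'
          + ∑ a ∈ Finset.univ.erase p', blk W n m k a * f n a
          = ∑ a, blk W n m k a * f n a :=
        Finset.add_sum_erase Finset.univ (fun a => blk W n m k a * f n a) (Finset.mem_univ p')
      have hrowe : ∑ a ∈ Finset.univ.erase p', blk W n m k a = 1 - blk W n m k p' := by
        have h := Finset.add_sum_erase Finset.univ (fun a => blk W n m k a) (Finset.mem_univ p')
        rw [hrow k] at h
        linarith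
      have h1 : (1 - blk W n m k p') * mn n
          ≤ ∑ a ∈ Finset.univ.erase p', blk W n m k a * f n a := by
        rw [← hrowe, Finset.sum_mul]
        refine Finset.sum_le_sum fun a _ => ?_
        exact mul_le_mul_of_nonneg_left (Finset.inf'_le (f n) (Finset.mem_univ a)) (blk0 n m k a)
      have h2 : f n p' = Mx n := hp'.symm
      rw [h2] at hsplit
      have hδk : δ ≤ blk W n m k p' := hδle k p'
      have hS : mn n ≤ Mx n := hmnMx n
      nlinarith [hsplit, h1, mul_nonneg (sub_nonneg.mpr hδk) (sub_nonneg.mpr hS)]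
    have hMub : Mx (n + m) ≤ Mx n - δ * (Mx n - mn n) :=
      Finset.sup'_le _ _ fun k _ => hub k
    have hmlb : mn n + δ * (Mx n - mn n) ≤ mn (n + m) :=
      Finset.le_inf' _ _ fun k _ => hlb k
    nlinarith [mul_nonneg hδ (sub_nonneg.mpr (hmnMx n))]
  -- geometric decay of the spread
  have hbound : ∀ n, Mx n - mn n ≤ (1 - η ^ L₀) ^ (n / L₀) := by
    intro n
    induction n using Nat.strong_induction_on with
    | _ n ih =>
      by_cases hn : n < L₀
      · rw [Nat.div_eq_of_lt hn, pow_zero]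
        have h1 : Mx n ≤ 1 := Finset.sup'_le _ _ fun k _ => blk_le_one 0 n k j
        have h2 : 0 ≤ mn n := Finset.le_inf' _ _ fun k _ => blk0 0 n k j
        linarith
      · push_neg at hn
        have heq : (n - L₀) + L₀ = n := by omega
        have hc := contract (n - L₀) L₀ (η ^ L₀) hηL.le fun a b => blkge (n - L₀) a b
        rw [heq] at hc
        have hih := ih (n - L₀) (by omega)
        have hdiv : n / L₀ = (n - L₀) / L₀ + 1 := by
          have h := Nat.add_div_right (n - L₀) hL₀pos
          rw [heq] at h
          exact h
        calc Mx n - mn n ≤ (1 - η ^ L₀) * (Mx (n - L₀) - mn (n - L₀)) := hc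
          _ ≤ (1 - η ^ L₀) * (1 - η ^ L₀) ^ ((n - L₀) / L₀) :=
              mul_le_mul_of_nonneg_left hih hq0.le
          _ = (1 - η ^ L₀) ^ (n / L₀) := by rw [hdiv, pow_succ]; ring
  -- the entry and the average both lie between mn and Mx
  have hPi : gossipProd W ℓ i j = f (ℓ + 1) i := by rw [gossipProd_eq_blk]
  have hle1 : mn (ℓ + 1) ≤ f (ℓ + 1) i := Finset.inf'_le _ (Finset.mem_univ i)
  have hle2 : f (ℓ + 1) i ≤ Mx (ℓ + 1) := Finset.le_sup' _ (Finset.mem_univ i)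
  have hcolsum : ∑ k, f (ℓ + 1) k = 1 := (dsblk 0 (ℓ + 1)).2.2 j
  have hIR : (0:ℝ) < (I : ℝ) := by
    have : (0:ℕ) < I := by omega
    exact_mod_cast this
  have hconstmn : (I : ℝ) * mn (ℓ + 1) ≤ 1 := by
    rw [← hcolsum]
    calc (I : ℝ) * mn (ℓ + 1) = ∑ _k : Fin I, mn (ℓ + 1) := by
          rw [Finset.sum_const, Finset.card_univ, Fintype.card_fin, nsmul_eq_mul]
      _ ≤ ∑ k, f (ℓ + 1) k :=
          Finset.sum_le_sum fun k _ => Finset.inf'_le _ (Finset.mem_univ k)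
  have hconstMx : 1 ≤ (I : ℝ) * Mx (ℓ + 1) := by
    rw [← hcolsum]
    calc ∑ k, f (ℓ + 1) k ≤ ∑ _k : Fin I, Mx (ℓ + 1) :=
          Finset.sum_le_sum fun k _ => Finset.le_sup' _ (Finset.mem_univ k)
      _ = (I : ℝ) * Mx (ℓ + 1) := by
          rw [Finset.sum_const, Finset.card_univ, Fintype.card_fin, nsmul_eq_mul]
  have havg1 : mn (ℓ + 1) ≤ 1 / (I : ℝ) := by
    rw [le_div_iff₀ hIR]
    nlinarith
  have havg2 : 1 / (I : ℝ) ≤ Mx (ℓ + 1) := by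
    rw [div_le_iff₀ hIR]
    nlinarith
  have habs : |gossipProd W ℓ i j - 1 / (I : ℝ)| ≤ Mx (ℓ + 1) - mn (ℓ + 1) := by
    rw [hPi, abs_sub_le_iff]
    constructor <;> linarith
  -- facts about lam
  have hLne : (L₀ : ℝ) ≠ 0 := Nat.cast_ne_zero.mpr hL₀pos.ne'
  have hlamL : lam ^ L₀ = 1 - η ^ L₀ := by
    rw [hlam, ← Real.rpow_natCast ((1 - η ^ L₀) ^ ((1:ℝ) / (L₀:ℝ))) L₀,
      ← Real.rpow_mul hq0.le, one_div, inv_mul_cancel₀ hLne, Real.rpow_one]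
  have hlam0 : 0 < lam := by
    rw [hlam]; exact Real.rpow_pos_of_pos hq0 _
  have hlam1 : lam ≤ 1 := by
    rw [hlam]
    exact Real.rpow_le_one hq0.le hq1.le (by positivity)
  set k := (ℓ + 1) / L₀ with hk
  have hkle : ℓ ≤ L₀ * k + L₀ := by
    have h1 := Nat.div_add_mod (ℓ + 1) L₀
    have h2 := Nat.mod_lt (ℓ + 1) hL₀pos
    have h3 : ℓ + 1 ≤ L₀ * k + L₀ := by
      calc ℓ + 1 = L₀ * k + (ℓ + 1) % L₀ := h1.symm
        _ ≤ L₀ * k + L₀ := Nat.add_le_add_left h2.le _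
    exact le_trans (Nat.le_succ ℓ) h3
  have hgeo : (1 - η ^ L₀) ^ k * (1 - η ^ L₀) ≤ lam ^ ℓ := by
    rw [← hlamL, ← pow_mul, ← pow_add]
    exact pow_le_pow_of_le_one hlam0.le hlam1 hkle
  have hzpos : (0:ℝ) < η ^ (-(L₀ : ℤ)) := zpow_pos hη0 _
  have hfinal : (1 - η ^ L₀) ^ k ≤ 2 * ((1 + η ^ (-(L₀:ℤ))) / (1 - η ^ L₀)) * lam ^ ℓ := by
    have h1 : (1 - η ^ L₀) ^ k ≤ lam ^ ℓ / (1 - η ^ L₀) := by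
      rw [le_div_iff₀ hq0]
      exact hgeo
    have h2 : lam ^ ℓ / (1 - η ^ L₀) ≤ 2 * ((1 + η ^ (-(L₀:ℤ))) / (1 - η ^ L₀)) * lam ^ ℓ := by
      have he : 2 * ((1 + η ^ (-(L₀:ℤ))) / (1 - η ^ L₀)) * lam ^ ℓ
          = (2 * (1 + η ^ (-(L₀:ℤ))) * lam ^ ℓ) / (1 - η ^ L₀) := by ring
      rw [he, div_le_div_iff_of_pos_right hq0]
      nlinarith [pow_nonneg hlam0.le ℓ]
    linarith
  calc |gossipProd W ℓ i j - 1 / (I:ℝ)| ≤ Mx (ℓ + 1) - mn (ℓ + 1) := habs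
    _ ≤ (1 - η ^ L₀) ^ ((ℓ + 1) / L₀) := hbound (ℓ + 1)
    _ ≤ 2 * ((1 + η ^ (-(L₀:ℤ))) / (1 - η ^ L₀)) * lam ^ ℓ := hfinal
end

section
/- Let A, B ∈ Matrix (Fin M) (Fin N) ℝ be matrices of full column rank, i.e. AᵀA and BᵀB are invertible. Define the Moore–Penrose pseudo-inverses A⁺ = (AᵀA)⁻¹Aᵀ and B⁺ = (BᵀB)⁻¹Bᵀ. Then in the operator (spectral) norm: ‖A⁺ − B⁺‖ ≤ √2 · ‖A⁺‖ · ‖B⁺‖ · ‖A − B‖. -/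
/-!
With `P = B B⁺` the orthogonal projection onto the range of `B`, the two pieces of `A⁺ - B⁺` are
`(A⁺ - B⁺) P = -A⁺ (A - B) B⁺` and, because `Bᵀ (1 - P) = 0`,
`(A⁺ - B⁺) (1 - P) = (AᵀA)⁻¹ (A - B)ᵀ (1 - P)`, where `‖(AᵀA)⁻¹‖ = ‖A⁺ (A⁺)ᵀ‖ = ‖A⁺‖²`.
Since `P x` and `(1 - P) x` are orthogonal, `‖T‖² ≤ ‖T P‖² + ‖T (1 - P)‖²` for every `T`, so
`‖A⁺ - B⁺‖ ≤ ‖A⁺‖ ‖A - B‖ √(‖A⁺‖² + ‖B⁺‖²)`. By symmetry `‖A⁺‖ ≤ ‖B⁺‖`, and then the square root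
is at most `√2 ‖B⁺‖`.
-/

open Matrix

/-- Operator (spectral) 2-norm of a real matrix. -/
noncomputable def matOpNorm {m n : ℕ} (A : Matrix (Fin m) (Fin n) ℝ) : ℝ :=
  ‖LinearMap.toContinuousLinearMap (Matrix.toEuclideanLin A)‖

/-- The Moore–Penrose pseudo-inverse of a full-column-rank matrix:
`A⁺ = (AᵀA)⁻¹Aᵀ`. -/
noncomputable def pinv {m n : ℕ} (A : Matrix (Fin m) (Fin n) ℝ) :
    Matrix (Fin n) (Fin m) ℝ :=
  (Aᵀ * A)⁻¹ * Aᵀ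

open scoped Matrix.Norms.L2Operator

theorem mul_add_mul_le_sqrt_mul_sqrt (a b u v : ℝ) :
    a * u + b * v ≤ √(a ^ 2 + b ^ 2) * √(u ^ 2 + v ^ 2) := by
  rw [← Real.sqrt_mul (by positivity)]
  refine Real.le_sqrt_of_sq_le ?_
  nlinarith [sq_nonneg (a * v - b * u)]

theorem sqrt_sq_add_sq_le_sqrt_two_mul {a b : ℝ} (ha : 0 ≤ a) (hab : a ≤ b) :
    √(a ^ 2 + b ^ 2) ≤ √2 * b := by
  calc √(a ^ 2 + b ^ 2) ≤ √(2 * b ^ 2) := Real.sqrt_le_sqrt (by nlinarith)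
    _ = √2 * b := by rw [Real.sqrt_mul zero_le_two, Real.sqrt_sq (ha.trans hab)]

section InnerProductSpace

variable {𝕜 E F : Type*} [RCLike 𝕜] [NormedAddCommGroup E] [InnerProductSpace 𝕜 E]
  [CompleteSpace E] [NormedAddCommGroup F] [NormedSpace 𝕜 F]

theorem IsStarProjection.norm_sq_apply_add_norm_sq_one_sub_apply {p : E →L[𝕜] E}
    (hp : IsStarProjection p) (x : E) : ‖p x‖ ^ 2 + ‖(1 - p) x‖ ^ 2 = ‖x‖ ^ 2 := by
  obtain ⟨K, _, rfl⟩ := isStarProjection_iff_eq_starProjection.mp hp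
  rw [← K.starProjection_orthogonal', K.norm_sq_eq_add_norm_sq_starProjection x]

theorem ContinuousLinearMap.opNorm_le_sqrt_of_isStarProjection (T : E →L[𝕜] F) {p : E →L[𝕜] E}
    (hp : IsStarProjection p) : ‖T‖ ≤ √(‖T ∘L p‖ ^ 2 + ‖T ∘L (1 - p)‖ ^ 2) := by
  refine opNorm_le_bound _ (Real.sqrt_nonneg _) fun x => ?_
  have hsplit : T x = (T ∘L p) (p x) + (T ∘L (1 - p)) ((1 - p) x) := by
    have hpp : p (p x) = p x := congr($(hp.isIdempotentElem.eq) x)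
    simp [hpp]
  calc ‖T x‖ ≤ ‖T ∘L p‖ * ‖p x‖ + ‖T ∘L (1 - p)‖ * ‖(1 - p) x‖ := by
        rw [hsplit]
        exact (norm_add_le _ _).trans (add_le_add (le_opNorm _ _) (le_opNorm _ _))
    _ ≤ √(‖T ∘L p‖ ^ 2 + ‖T ∘L (1 - p)‖ ^ 2) * √(‖p x‖ ^ 2 + ‖(1 - p) x‖ ^ 2) :=
        mul_add_mul_le_sqrt_mul_sqrt _ _ _ _
    _ = √(‖T ∘L p‖ ^ 2 + ‖T ∘L (1 - p)‖ ^ 2) * ‖x‖ := by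
        rw [hp.norm_sq_apply_add_norm_sq_one_sub_apply, Real.sqrt_sq (norm_nonneg x)]

end InnerProductSpace

namespace Matrix

variable {𝕜 l m : Type*} [RCLike 𝕜] [Fintype l] [Fintype m] [DecidableEq m]

theorem toEuclideanLin_trans_toContinuousLinearMap_mul (T : Matrix l m 𝕜) (Y : Matrix m m 𝕜) :
    (toEuclideanLin ≪≫ₗ LinearMap.toContinuousLinearMap) (T * Y) =
      (toEuclideanLin ≪≫ₗ LinearMap.toContinuousLinearMap) T ∘L toEuclideanCLM (𝕜 := 𝕜) Y := by
  ext x i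
  simp [ofLp_toEuclideanCLM, toLpLin_apply, mulVec_mulVec]

theorem l2_opNorm_le_sqrt_of_isStarProjection (T : Matrix l m 𝕜) {P : Matrix m m 𝕜}
    (hP : IsStarProjection P) : ‖T‖ ≤ √(‖T * P‖ ^ 2 + ‖T * (1 - P)‖ ^ 2) := by
  simpa only [l2_opNorm_def, toEuclideanLin_trans_toContinuousLinearMap_mul, map_sub, map_one] using
    ContinuousLinearMap.opNorm_le_sqrt_of_isStarProjection _ (hP.map (toEuclideanCLM (𝕜 := 𝕜)))

theorem l2_opNorm_transpose [DecidableEq l] (T : Matrix l m ℝ) : ‖Tᵀ‖ = ‖T‖ := by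
  rw [← conjTranspose_eq_transpose_of_trivial, l2_opNorm_conjTranspose]

end Matrix

theorem matOpNorm_eq_norm {m n : ℕ} (A : Matrix (Fin m) (Fin n) ℝ) : matOpNorm A = ‖A‖ := rfl

section PseudoInverse

variable {m n : ℕ} {A B : Matrix (Fin m) (Fin n) ℝ}

theorem transpose_pinv : (pinv A)ᵀ = A * (Aᵀ * A)⁻¹ := by
  rw [pinv, transpose_mul, transpose_nonsing_inv, transpose_mul, transpose_transpose]

theorem pinv_mul_self (hA : IsUnit (Aᵀ * A).det) : pinv A * A = 1 := by
  rw [pinv, Matrix.mul_assoc, nonsing_inv_mul _ hA]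

theorem pinv_mul_transpose_pinv (hA : IsUnit (Aᵀ * A).det) :
    pinv A * (pinv A)ᵀ = (Aᵀ * A)⁻¹ := by
  rw [transpose_pinv, ← Matrix.mul_assoc, pinv_mul_self hA, Matrix.one_mul]

theorem norm_inv_transpose_mul_self (hA : IsUnit (Aᵀ * A).det) :
    ‖(Aᵀ * A)⁻¹‖ = ‖pinv A‖ ^ 2 := by
  have h := l2_opNorm_conjTranspose_mul_self (pinv A)ᴴ
  rw [conjTranspose_conjTranspose, l2_opNorm_conjTranspose] at h
  rw [← pinv_mul_transpose_pinv hA, sq, ← h, conjTranspose_eq_transpose_of_trivial]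

theorem isStarProjection_mul_pinv (hA : IsUnit (Aᵀ * A).det) : IsStarProjection (A * pinv A) where
  isIdempotentElem := by
    rw [IsIdempotentElem, Matrix.mul_assoc, ← Matrix.mul_assoc (pinv A), pinv_mul_self hA,
      Matrix.one_mul]
  isSelfAdjoint := by
    rw [IsSelfAdjoint, star_eq_conjTranspose, conjTranspose_eq_transpose_of_trivial,
      transpose_mul, transpose_pinv, pinv, Matrix.mul_assoc]

theorem pinv_mul_mul_pinv (hA : IsUnit (Aᵀ * A).det) : pinv A * (A * pinv A) = pinv A := by
  rw [← Matrix.mul_assoc, pinv_mul_self hA, Matrix.one_mul]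

theorem transpose_mul_mul_pinv (hA : IsUnit (Aᵀ * A).det) : Aᵀ * (A * pinv A) = Aᵀ := by
  rw [pinv, ← Matrix.mul_assoc, ← Matrix.mul_assoc, mul_nonsing_inv _ hA, Matrix.one_mul]

theorem pinv_sub_pinv_mul_mul_pinv (hA : IsUnit (Aᵀ * A).det) (hB : IsUnit (Bᵀ * B).det) :
    (pinv A - pinv B) * (B * pinv B) = -(pinv A * (A - B) * pinv B) := by
  rw [Matrix.sub_mul, pinv_mul_mul_pinv hB, Matrix.mul_sub, pinv_mul_self hA, Matrix.sub_mul,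
    Matrix.one_mul, Matrix.mul_assoc, neg_sub]

theorem pinv_sub_pinv_mul_one_sub_mul_pinv (hB : IsUnit (Bᵀ * B).det) :
    (pinv A - pinv B) * (1 - B * pinv B) = (Aᵀ * A)⁻¹ * (A - B)ᵀ * (1 - B * pinv B) := by
  have hB₀ : Bᵀ * (1 - B * pinv B) = 0 := by
    rw [Matrix.mul_sub, transpose_mul_mul_pinv hB, Matrix.mul_one, sub_self]
  have hpinvB₀ : pinv B * (1 - B * pinv B) = 0 := by
    rw [Matrix.mul_sub, pinv_mul_mul_pinv hB, Matrix.mul_one, sub_self]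
  rw [Matrix.sub_mul, hpinvB₀, sub_zero, transpose_sub, Matrix.mul_assoc, Matrix.sub_mul, hB₀,
    sub_zero, pinv, Matrix.mul_assoc]

theorem norm_pinv_sub_pinv_le (hA : IsUnit (Aᵀ * A).det) (hB : IsUnit (Bᵀ * B).det) :
    ‖pinv A - pinv B‖ ≤ ‖pinv A‖ * ‖A - B‖ * √(‖pinv A‖ ^ 2 + ‖pinv B‖ ^ 2) := by
  have hP := isStarProjection_mul_pinv hB
  have hrange : ‖(pinv A - pinv B) * (B * pinv B)‖ ≤ ‖pinv A‖ * ‖A - B‖ * ‖pinv B‖ := by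
    rw [pinv_sub_pinv_mul_mul_pinv hA hB, norm_neg]
    exact (l2_opNorm_mul _ _).trans (by gcongr; exact l2_opNorm_mul _ _)
  have hkernel : ‖(pinv A - pinv B) * (1 - B * pinv B)‖ ≤ ‖pinv A‖ * ‖A - B‖ * ‖pinv A‖ := by
    calc ‖(pinv A - pinv B) * (1 - B * pinv B)‖
        ≤ ‖(Aᵀ * A)⁻¹‖ * ‖(A - B)ᵀ‖ * ‖1 - B * pinv B‖ := by
          rw [pinv_sub_pinv_mul_one_sub_mul_pinv hB]
          exact (l2_opNorm_mul _ _).trans (by gcongr; exact l2_opNorm_mul _ _)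
      _ ≤ ‖pinv A‖ ^ 2 * ‖A - B‖ * 1 := by
          rw [norm_inv_transpose_mul_self hA, l2_opNorm_transpose]
          gcongr
          exact hP.one_sub.norm_le
      _ = ‖pinv A‖ * ‖A - B‖ * ‖pinv A‖ := by ring
  calc ‖pinv A - pinv B‖
      ≤ √(‖(pinv A - pinv B) * (B * pinv B)‖ ^ 2 + ‖(pinv A - pinv B) * (1 - B * pinv B)‖ ^ 2) :=
        l2_opNorm_le_sqrt_of_isStarProjection _ hP
    _ ≤ √((‖pinv A‖ * ‖A - B‖ * ‖pinv B‖) ^ 2 + (‖pinv A‖ * ‖A - B‖ * ‖pinv A‖) ^ 2) := by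
        gcongr
    _ = ‖pinv A‖ * ‖A - B‖ * √(‖pinv A‖ ^ 2 + ‖pinv B‖ ^ 2) := by
        rw [mul_pow (‖pinv A‖ * ‖A - B‖), mul_pow (‖pinv A‖ * ‖A - B‖), ← mul_add,
          Real.sqrt_mul (sq_nonneg _), Real.sqrt_sq (by positivity), add_comm]

theorem norm_pinv_sub_pinv_le_of_norm_le (hA : IsUnit (Aᵀ * A).det) (hB : IsUnit (Bᵀ * B).det)
    (hAB : ‖pinv A‖ ≤ ‖pinv B‖) :
    ‖pinv A - pinv B‖ ≤ √2 * ‖pinv A‖ * ‖pinv B‖ * ‖A - B‖ := by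
  calc ‖pinv A - pinv B‖ ≤ ‖pinv A‖ * ‖A - B‖ * √(‖pinv A‖ ^ 2 + ‖pinv B‖ ^ 2) :=
        norm_pinv_sub_pinv_le hA hB
    _ ≤ ‖pinv A‖ * ‖A - B‖ * (√2 * ‖pinv B‖) := by
        gcongr; exact sqrt_sq_add_sq_le_sqrt_two_mul (norm_nonneg _) hAB
    _ = √2 * ‖pinv A‖ * ‖pinv B‖ * ‖A - B‖ := by ring

end PseudoInverse

/-- pseudo-inverse perturbation bound
`‖A⁺ − B⁺‖ ≤ √2 ‖A⁺‖ ‖B⁺‖ ‖A − B‖`. -/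
theorem pinv_perturbation_bound {M N : ℕ}
    (A B : Matrix (Fin M) (Fin N) ℝ)
    (hA : IsUnit (Aᵀ * A).det) (hB : IsUnit (Bᵀ * B).det) :
    matOpNorm (pinv A - pinv B) ≤
      Real.sqrt 2 * matOpNorm (pinv A) * matOpNorm (pinv B) * matOpNorm (A - B) := by
  simp only [matOpNorm_eq_norm]
  rcases le_total ‖pinv A‖ ‖pinv B‖ with hAB | hBA
  · exact norm_pinv_sub_pinv_le_of_norm_le hA hB hAB
  · rw [norm_sub_rev, norm_sub_rev A, mul_right_comm _ ‖pinv A‖]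
    exact norm_pinv_sub_pinv_le_of_norm_le hB hA hBA
end

section
/- Let X ⊆ ℝ^N be a convex set, g : ℝ^N → ℝ^M, and G : ℝ^N → Matrix (Fin M) (Fin N) ℝ such that for every y ∈ X, g has Jacobian G(y) within X at y (HasFDerivWithinAt with derivative the linear map v ↦ G(y)·v). Assume there are constants 0 < σ_min ≤ σ_max < ∞ and ω > 0 such that for all y, y' ∈ X: σ_min‖v‖ ≤ ‖G(y)·v‖ for all v, ‖G(y)‖ ≤ σ_max, and ‖G(y) − G(y')‖ ≤ ω‖y − y'‖ (operator norms). Let x⋆ ∈ X satisfy G(x⋆)ᵀ·g(x⋆) = 0 and set ε_min = ‖g(x⋆)‖. Let α ∈ (0,1], and for x ∈ X define the Gauss–Newton descent d(x) = (G(x)ᵀG(x))⁻¹·G(x)ᵀ·g(x). Then for every x ∈ X: ‖x − x⋆ − α·d(x)‖ ≤ T₁·‖x − x⋆‖² + T₂·‖x − x⋆‖, where T₁ = α·ω/(2σ_min) and T₂ = (1−α)·σ_max/σ_min + √2·α·ω·ε_min/σ_min². -/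
/-!
Write `e = x - x⋆`, `A = G(x)` and `P = (AᵀA)⁻¹Aᵀ`, so that `PA = 1`. Splitting
`g(x) = r + Ae + g(x⋆)` gives `x - x⋆ - α d(x) = (1 - α) e - α P r - α P g(x⋆)`.
Lipschitz continuity of the Jacobian along the segment `[x⋆, x]` gives `‖r‖ ≤ ω‖e‖²/2`.
Since `u = Pv` solves the normal equations `AᵀAu = Aᵀv`, we have `σ_min‖u‖ ≤ ‖v‖` and
`σ_min²‖u‖ ≤ ‖Aᵀv‖`. Finally, stationarity of `x⋆` turns `Aᵀg(x⋆)` into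
`(G(x) - G(x⋆))ᵀ g(x⋆)`, whose norm is at most `ω‖e‖ε_min`.
-/

open Matrix

noncomputable def matVec {m n : ℕ} (A : Matrix (Fin m) (Fin n) ℝ)
    (v : EuclideanSpace ℝ (Fin n)) : EuclideanSpace ℝ (Fin m) :=
  Matrix.toEuclideanLin A v

open scoped RealInnerProductSpace

theorem Convex.norm_image_sub_image_sub_fderiv_le_of_lipschitz
    {E F : Type*} [NormedAddCommGroup E] [NormedSpace ℝ E] [NormedAddCommGroup F]
    [NormedSpace ℝ F] {s : Set E} (hs : Convex ℝ s) {f : E → F} {f' : E → E →L[ℝ] F}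
    (hf : ∀ y ∈ s, HasFDerivWithinAt f (f' y) s y) {ω : ℝ}
    (hf' : ∀ y ∈ s, ∀ y' ∈ s, ‖f' y - f' y'‖ ≤ ω * ‖y - y'‖) {x₀ x : E} (hx₀ : x₀ ∈ s)
    (hx : x ∈ s) :
    ‖f x - f x₀ - f' x (x - x₀)‖ ≤ ω / 2 * ‖x - x₀‖ ^ 2 := by
  set e := x - x₀
  set p : ℝ → E := fun t => x₀ + t • e
  have hp : Set.MapsTo p (Set.Icc 0 1) s := fun t ht => by
    simpa [p, e, AffineMap.lineMap_apply_module', add_comm] using hs.lineMap_mem hx₀ hx ht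
  have hφ : ∀ t ∈ Set.Icc (0 : ℝ) 1, HasDerivWithinAt (fun t => f (p t) - f x₀ - t • f' x e)
      (f' (p t) e - f' x e) (Set.Icc 0 1) t := fun t ht => by
    have hpt : HasDerivWithinAt p e (Set.Icc 0 1) t := by
      have := ((hasDerivAt_id' t).smul_const e).const_add x₀
      rw [one_smul] at this
      exact this.hasDerivWithinAt
    refine (((hf (p t) (hp ht)).comp_hasDerivWithinAt t hpt hp).sub_const _).sub ?_
    simpa using ((hasDerivAt_id t).smul_const (f' x e)).hasDerivWithinAt
  have hB : ∀ t, HasDerivAt (fun t : ℝ => ω * ‖e‖ ^ 2 * (t - t ^ 2 / 2))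
      (ω * ‖e‖ ^ 2 * (1 - t)) t := fun t => by
    simpa using (((hasDerivAt_id t).sub ((hasDerivAt_pow 2 t).div_const 2)).const_mul
      (ω * ‖e‖ ^ 2))
  have hbound : ∀ t ∈ Set.Ico (0 : ℝ) 1, ‖f' (p t) e - f' x e‖ ≤ ω * ‖e‖ ^ 2 * (1 - t) :=
    fun t ht => calc
      ‖f' (p t) e - f' x e‖ ≤ ‖f' (p t) - f' x‖ * ‖e‖ := (f' (p t) - f' x).le_opNorm e
      _ ≤ ω * ‖p t - x‖ * ‖e‖ := by gcongr; exact hf' _ (hp (Set.Ico_subset_Icc_self ht)) _ hx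
      _ = ω * ‖e‖ ^ 2 * (1 - t) := by
        have : p t - x = (t - 1) • e := by simp only [p, e]; module
        rw [this, norm_smul, Real.norm_of_nonpos (by linarith [ht.2])]; ring
  have := image_norm_le_of_norm_deriv_right_le_deriv_boundary
    (fun t ht => (hφ t ht).continuousWithinAt)
    (fun t ht => (hφ t (Set.Ico_subset_Icc_self ht)).mono_of_mem_nhdsWithin
      (Icc_mem_nhdsGE_of_mem ht)) (by simp [p]) hB hbound (b := 1) (x := 1) (by simp)
  simp only [p, one_smul, show x₀ + e = x from add_sub_cancel x₀ x] at this
  linarith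

section NormalEquation

variable {E F : Type*} [NormedAddCommGroup E] [InnerProductSpace ℝ E] [FiniteDimensional ℝ E]
  [NormedAddCommGroup F] [InnerProductSpace ℝ F] [FiniteDimensional ℝ F]
  {T : E →ₗ[ℝ] F} {u : E} {v : F}

theorem LinearMap.norm_apply_sq_eq_inner_of_adjoint_apply_eq
    (h : T.adjoint (T u) = T.adjoint v) : ‖T u‖ ^ 2 = ⟪v, T u⟫ := by
  rw [← real_inner_self_eq_norm_sq, ← LinearMap.adjoint_inner_left, h,
    LinearMap.adjoint_inner_left]

theorem LinearMap.mul_norm_le_of_adjoint_apply_eq {σ : ℝ} (hT : ∀ w, σ * ‖w‖ ≤ ‖T w‖)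
    (h : T.adjoint (T u) = T.adjoint v) : σ * ‖u‖ ≤ ‖v‖ := by
  refine (hT u).trans ?_
  have := norm_apply_sq_eq_inner_of_adjoint_apply_eq h ▸ real_inner_le_norm v (T u)
  nlinarith [norm_nonneg (T u), norm_nonneg v]

theorem LinearMap.sq_mul_norm_le_of_adjoint_apply_eq {σ : ℝ} (hσ : 0 ≤ σ)
    (hT : ∀ w, σ * ‖w‖ ≤ ‖T w‖) (h : T.adjoint (T u) = T.adjoint v) :
    σ ^ 2 * ‖u‖ ≤ ‖T.adjoint v‖ := by
  have hsq : (σ * ‖u‖) ^ 2 ≤ ‖T.adjoint v‖ * ‖u‖ := calc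
    (σ * ‖u‖) ^ 2 ≤ ‖T u‖ ^ 2 := pow_le_pow_left₀ (by positivity) (hT u) 2
    _ = ⟪T.adjoint v, u⟫ := by
      rw [norm_apply_sq_eq_inner_of_adjoint_apply_eq h, LinearMap.adjoint_inner_left]
    _ ≤ ‖T.adjoint v‖ * ‖u‖ := real_inner_le_norm _ _
  rcases (norm_nonneg u).eq_or_lt with hu | hu
  · rw [← hu, mul_zero]; exact norm_nonneg _
  · nlinarith

end NormalEquation

theorem Matrix.toEuclideanLin_transpose_eq_adjoint {m n : Type*} [Fintype m] [Fintype n]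
    [DecidableEq m] [DecidableEq n] (A : Matrix m n ℝ) :
    Aᵀ.toEuclideanLin = A.toEuclideanLin.adjoint := by
  rw [← conjTranspose_eq_transpose_of_trivial, toEuclideanLin_conjTranspose_eq_adjoint]

section MatVec

variable {m n : ℕ}

theorem matVec_mul {k : ℕ} (A : Matrix (Fin m) (Fin n) ℝ) (B : Matrix (Fin n) (Fin k) ℝ)
    (v : EuclideanSpace ℝ (Fin k)) : matVec (A * B) v = matVec A (matVec B v) := by
  simp [matVec, toLpLin_apply, mulVec_mulVec]

theorem matVec_add (A : Matrix (Fin m) (Fin n) ℝ) (v w : EuclideanSpace ℝ (Fin n)) :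
    matVec A (v + w) = matVec A v + matVec A w :=
  map_add _ v w

theorem norm_matVec_le (A : Matrix (Fin m) (Fin n) ℝ) (v : EuclideanSpace ℝ (Fin n)) :
    ‖matVec A v‖ ≤ matOpNorm A * ‖v‖ :=
  (LinearMap.toContinuousLinearMap (toEuclideanLin A)).le_opNorm v

theorem matOpNorm_transpose (A : Matrix (Fin m) (Fin n) ℝ) : matOpNorm Aᵀ = matOpNorm A := by
  rw [← conjTranspose_eq_transpose_of_trivial]
  exact l2_opNorm_conjTranspose A

theorem norm_matVec_transpose_le_of_matVec_transpose_eq_zero {A B : Matrix (Fin m) (Fin n) ℝ}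
    {w : EuclideanSpace ℝ (Fin m)} (hB : matVec Bᵀ w = 0) :
    ‖matVec Aᵀ w‖ ≤ matOpNorm (A - B) * ‖w‖ := by
  have : matVec Aᵀ w = matVec (A - B)ᵀ w := by
    simp only [matVec, transpose_sub, map_sub, LinearMap.sub_apply] at hB ⊢
    rw [hB, sub_zero]
  rw [this, ← matOpNorm_transpose]
  exact norm_matVec_le _ _

theorem isUnit_det_transpose_mul_self_of_mul_norm_le {A : Matrix (Fin m) (Fin n) ℝ} {σ : ℝ}
    (hσ : 0 < σ) (hA : ∀ v, σ * ‖v‖ ≤ ‖matVec A v‖) : IsUnit (Aᵀ * A).det := by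
  have hinj : Function.Injective A.mulVec := fun v w hvw => by
    have h := hA (WithLp.toLp 2 (v - w))
    simp only [matVec, toLpLin_toLp, toLin'_apply, mulVec_sub, hvw, sub_self,
      WithLp.toLp_zero, norm_zero] at h
    have h0 : ‖WithLp.toLp 2 (v - w)‖ ≤ 0 := nonpos_of_mul_nonpos_right h hσ
    simpa [sub_eq_zero] using h0
  rw [← isUnit_iff_isUnit_det, ← conjTranspose_eq_transpose_of_trivial]
  exact (PosDef.conjTranspose_mul_self A hinj).isUnit

theorem matVec_pinv_matVec {A : Matrix (Fin m) (Fin n) ℝ} (hA : IsUnit (Aᵀ * A).det)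
    (v : EuclideanSpace ℝ (Fin n)) : matVec ((Aᵀ * A)⁻¹ * Aᵀ) (matVec A v) = v := by
  rw [← matVec_mul, Matrix.mul_assoc, nonsing_inv_mul _ hA]
  simp [matVec]

theorem adjoint_apply_matVec_pinv {A : Matrix (Fin m) (Fin n) ℝ} (hA : IsUnit (Aᵀ * A).det)
    (v : EuclideanSpace ℝ (Fin m)) :
    (toEuclideanLin A).adjoint (matVec A (matVec ((Aᵀ * A)⁻¹ * Aᵀ) v)) =
      (toEuclideanLin A).adjoint v := by
  rw [← toEuclideanLin_transpose_eq_adjoint]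
  change matVec Aᵀ (matVec A _) = matVec Aᵀ v
  rw [← matVec_mul, ← matVec_mul, mul_nonsing_inv_cancel_left _ _ hA]

theorem norm_sub_smul_matVec_pinv_le {A : Matrix (Fin m) (Fin n) ℝ} {σ : ℝ} (hσ : 0 < σ)
    (hA : ∀ v, σ * ‖v‖ ≤ ‖matVec A v‖) {α : ℝ} (hα0 : 0 ≤ α) (hα1 : α ≤ 1)
    (e : EuclideanSpace ℝ (Fin n)) (r b : EuclideanSpace ℝ (Fin m)) :
    ‖e - α • matVec ((Aᵀ * A)⁻¹ * Aᵀ) (r + matVec A e + b)‖ ≤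
      (1 - α) * ‖e‖ + α * (‖r‖ / σ + ‖matVec Aᵀ b‖ / σ ^ 2) := by
  have hdet := isUnit_det_transpose_mul_self_of_mul_norm_le hσ hA
  set P := (Aᵀ * A)⁻¹ * Aᵀ
  have hPr : ‖matVec P r‖ ≤ ‖r‖ / σ := by
    rw [le_div_iff₀' hσ]
    exact LinearMap.mul_norm_le_of_adjoint_apply_eq hA (adjoint_apply_matVec_pinv hdet r)
  have hPb : ‖matVec P b‖ ≤ ‖matVec Aᵀ b‖ / σ ^ 2 := by
    rw [le_div_iff₀' (by positivity)]
    have := LinearMap.sq_mul_norm_le_of_adjoint_apply_eq hσ.le hA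
      (adjoint_apply_matVec_pinv hdet b)
    rwa [← toEuclideanLin_transpose_eq_adjoint] at this
  have hα1' : 0 ≤ 1 - α := sub_nonneg.2 hα1
  calc ‖e - α • matVec P (r + matVec A e + b)‖
      = ‖(1 - α) • e - α • (matVec P r + matVec P b)‖ := by
        rw [matVec_add, matVec_add, matVec_pinv_matVec hdet]
        congr 1
        module
    _ ≤ (1 - α) * ‖e‖ + α * (‖matVec P r‖ + ‖matVec P b‖) := by
        refine (norm_sub_le _ _).trans ?_
        rw [norm_smul, norm_smul, Real.norm_of_nonneg hα1', Real.norm_of_nonneg hα0]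
        gcongr
        exact norm_add_le _ _
    _ ≤ (1 - α) * ‖e‖ + α * (‖r‖ / σ + ‖matVec Aᵀ b‖ / σ ^ 2) := by gcongr

end MatVec

theorem gauss_newton_step_error_general {N M : ℕ}
    (X : Set (EuclideanSpace ℝ (Fin N))) (hX : Convex ℝ X)
    (g : EuclideanSpace ℝ (Fin N) → EuclideanSpace ℝ (Fin M))
    (G : EuclideanSpace ℝ (Fin N) → Matrix (Fin M) (Fin N) ℝ)
    (hderiv : ∀ y ∈ X, HasFDerivWithinAt g
      (LinearMap.toContinuousLinearMap (Matrix.toEuclideanLin (G y))) X y)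
    (σmin σmax ω : ℝ) (hσ0 : 0 < σmin) (hσσ : σmin ≤ σmax)
    (hlow : ∀ y ∈ X, ∀ v : EuclideanSpace ℝ (Fin N),
      σmin * ‖v‖ ≤ ‖matVec (G y) v‖)
    (hLip : ∀ y ∈ X, ∀ y' ∈ X, matOpNorm (G y - G y') ≤ ω * ‖y - y'‖)
    (xstar : EuclideanSpace ℝ (Fin N)) (hxstar : xstar ∈ X)
    (hfix : matVec (G xstar)ᵀ (g xstar) = 0)
    (εmin : ℝ) (hεmin : εmin = ‖g xstar‖)
    (α : ℝ) (hα0 : 0 < α) (hα1 : α ≤ 1)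
    (d : EuclideanSpace ℝ (Fin N) → EuclideanSpace ℝ (Fin N))
    (hd : ∀ x, d x = matVec (((G x)ᵀ * G x)⁻¹ * (G x)ᵀ) (g x))
    (T₁ T₂ : ℝ)
    (hT₁ : T₁ = α * ω / (2 * σmin))
    (hT₂ : T₂ = (1 - α) * σmax / σmin + Real.sqrt 2 * α * ω * εmin / σmin ^ 2) :
    ∀ x ∈ X, ‖x - xstar - α • d x‖ ≤ T₁ * ‖x - xstar‖ ^ 2 + T₂ * ‖x - xstar‖ := by
  intro x hx
  set e := x - xstar
  have hr : ‖g x - g xstar - matVec (G x) e‖ ≤ ω / 2 * ‖e‖ ^ 2 :=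
    hX.norm_image_sub_image_sub_fderiv_le_of_lipschitz hderiv
      (fun y hy y' hy' => by simpa only [matOpNorm, map_sub] using hLip y hy y' hy') hxstar hx
  have hb : ‖matVec (G x)ᵀ (g xstar)‖ ≤ √2 * (ω * ‖e‖ * εmin) := by
    have h := (norm_matVec_transpose_le_of_matVec_transpose_eq_zero hfix).trans
      (mul_le_mul_of_nonneg_right (hLip x hx xstar hxstar) (norm_nonneg (g xstar)))
    rw [← hεmin] at h
    exact h.trans (le_mul_of_one_le_left ((norm_nonneg _).trans h) Real.one_lt_sqrt_two.le)
  have hstep := norm_sub_smul_matVec_pinv_le hσ0 (hlow x hx) hα0.le hα1 e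
    (g x - g xstar - matVec (G x) e) (g xstar)
  rw [sub_add_cancel, sub_add_cancel, ← hd] at hstep
  have he : ‖e‖ ≤ σmax / σmin * ‖e‖ :=
    le_mul_of_one_le_left (norm_nonneg e) ((one_le_div hσ0).2 hσσ)
  have hα1' : 0 ≤ 1 - α := sub_nonneg.2 hα1
  calc ‖x - xstar - α • d x‖
      ≤ (1 - α) * ‖e‖ + α * (‖g x - g xstar - matVec (G x) e‖ / σmin +
          ‖matVec (G x)ᵀ (g xstar)‖ / σmin ^ 2) := hstep
    _ ≤ (1 - α) * (σmax / σmin * ‖e‖) +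
          α * (ω / 2 * ‖e‖ ^ 2 / σmin + √2 * (ω * ‖e‖ * εmin) / σmin ^ 2) := by gcongr
    _ = T₁ * ‖e‖ ^ 2 + T₂ * ‖e‖ := by
        rw [hT₁, hT₂]
        ring

/-- the core error estimate for the undamped Gauss–Newton step
(before projection): ‖x − x⋆ − α d(x)‖ ≤ T₁‖x − x⋆‖² + T₂‖x − x⋆‖. -/
theorem gauss_newton_step_error {N M : ℕ}
    (X : Set (EuclideanSpace ℝ (Fin N))) (hX : Convex ℝ X)
    (g : EuclideanSpace ℝ (Fin N) → EuclideanSpace ℝ (Fin M))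
    (G : EuclideanSpace ℝ (Fin N) → Matrix (Fin M) (Fin N) ℝ)
    (hderiv : ∀ y ∈ X, HasFDerivWithinAt g
      (LinearMap.toContinuousLinearMap (Matrix.toEuclideanLin (G y))) X y)
    (σmin σmax ω : ℝ) (hσ0 : 0 < σmin) (hσσ : σmin ≤ σmax) (hω : 0 < ω)
    (hlow : ∀ y ∈ X, ∀ v : EuclideanSpace ℝ (Fin N),
      σmin * ‖v‖ ≤ ‖matVec (G y) v‖)
    (hup : ∀ y ∈ X, matOpNorm (G y) ≤ σmax)
    (hLip : ∀ y ∈ X, ∀ y' ∈ X, matOpNorm (G y - G y') ≤ ω * ‖y - y'‖)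
    (xstar : EuclideanSpace ℝ (Fin N)) (hxstar : xstar ∈ X)
    (hfix : matVec (G xstar)ᵀ (g xstar) = 0)
    (εmin : ℝ) (hεmin : εmin = ‖g xstar‖)
    (α : ℝ) (hα0 : 0 < α) (hα1 : α ≤ 1)
    (d : EuclideanSpace ℝ (Fin N) → EuclideanSpace ℝ (Fin N))
    (hd : ∀ x, d x = matVec (((G x)ᵀ * G x)⁻¹ * (G x)ᵀ) (g x))
    (T₁ T₂ : ℝ)
    (hT₁ : T₁ = α * ω / (2 * σmin))
    (hT₂ : T₂ = (1 - α) * σmax / σmin + Real.sqrt 2 * α * ω * εmin / σmin ^ 2) :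
    ∀ x ∈ X, ‖x - xstar - α • d x‖ ≤ T₁ * ‖x - xstar‖ ^ 2 + T₂ * ‖x - xstar‖ :=
  gauss_newton_step_error_general X hX g G hderiv σmin σmax ω hσ0 hσσ hlow hLip xstar hxstar hfix
    εmin hεmin α hα0 hα1 d hd T₁ T₂ hT₁ hT₂
end

section
/- Let T₁ > 0, 0 ≤ T₂ < 1, and c > 0 satisfy c < (1 − T₂)²/(4T₁). Define ρ_min = ((1−T₂) − √((1−T₂)² − 4T₁c))/(2T₁) and ρ_max = ((1−T₂) + √((1−T₂)² − 4T₁c))/(2T₁). Let (ζ_k)_{k≥0} be a sequence of nonnegative reals satisfying ζ_{k+1} ≤ T₁·ζ_k² + T₂·ζ_k + c for all k. If ζ₀ < ρ_max, then limsup_{k→∞} ζ_k ≤ ρ_min. -/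
/-- dynamical-system core of Theorem 1: a nonnegative sequence
satisfying ζ_{k+1} ≤ T₁ζ_k² + T₂ζ_k + c started below the unstable fixed
point ρ_max has limsup at most the stable fixed point ρ_min. -/
theorem quadratic_recursion_limsup
    (T₁ T₂ c : ℝ) (hT₁ : 0 < T₁) (hT₂0 : 0 ≤ T₂) (hT₂1 : T₂ < 1)
    (hc0 : 0 < c) (hc : c < (1 - T₂) ^ 2 / (4 * T₁))
    (ρmin ρmax : ℝ)
    (hρmin : ρmin = ((1 - T₂) - Real.sqrt ((1 - T₂) ^ 2 - 4 * T₁ * c)) / (2 * T₁))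
    (hρmax : ρmax = ((1 - T₂) + Real.sqrt ((1 - T₂) ^ 2 - 4 * T₁ * c)) / (2 * T₁))
    (ζ : ℕ → ℝ) (hpos : ∀ k, 0 ≤ ζ k)
    (hrec : ∀ k, ζ (k + 1) ≤ T₁ * ζ k ^ 2 + T₂ * ζ k + c)
    (h0 : ζ 0 < ρmax) :
    Filter.limsup ζ Filter.atTop ≤ ρmin := by
  have h1T2 : 0 < 1 - T₂ := by linarith
  set D : ℝ := (1 - T₂) ^ 2 - 4 * T₁ * c with hDdef
  have hD0 : 0 < D := by
    have h := (lt_div_iff₀ (by positivity : (0:ℝ) < 4 * T₁)).mp hc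
    nlinarith [h]
  set s : ℝ := Real.sqrt D with hsdef
  have hs0 : 0 < s := Real.sqrt_pos.mpr hD0
  have hs2 : s ^ 2 = D := Real.sq_sqrt hD0.le
  have hslt : s < 1 - T₂ := by
    have hDlt : D < (1 - T₂) ^ 2 := by nlinarith
    have : s < Real.sqrt ((1 - T₂) ^ 2) := Real.sqrt_lt_sqrt hD0.le hDlt
    rwa [Real.sqrt_sq h1T2.le] at this
  have heqmin : s = (1 - T₂) - 2 * T₁ * ρmin := by
    rw [hρmin]; field_simp; try ring
  have heqmax : s = 2 * T₁ * ρmax - (1 - T₂) := by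
    rw [hρmax]; field_simp; try ring
  have hρmin0 : 0 < ρmin := by
    rw [hρmin]
    apply div_pos _ (by positivity)
    linarith
  have hminmax : ρmin < ρmax := by
    nlinarith [heqmin, heqmax, hs0, hT₁]
  have hfix : T₁ * ρmin ^ 2 + T₂ * ρmin + c = ρmin := by
    have h := hs2
    rw [heqmin] at h
    nlinarith [h]
  have hsum : T₁ * (ρmin + ρmax) = 1 - T₂ := by
    have := heqmin; have := heqmax; linarith
  have hprod : T₁ * (ρmin * ρmax) = c := by
    linear_combination ρmin * hsum - hfix
  -- monotonicity of ψ on nonneg reals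
  have hmono : ∀ a b : ℝ, 0 ≤ a → a ≤ b →
      T₁ * a ^ 2 + T₂ * a + c ≤ T₁ * b ^ 2 + T₂ * b + c := by
    intro a b ha hab
    nlinarith [mul_nonneg (sub_nonneg.mpr hab) (by linarith : (0:ℝ) ≤ a + b), hT₁.le, hT₂0]
  set B : ℝ := max (ζ 0) ρmin with hB
  have hBmin : ρmin ≤ B := le_max_right _ _
  have hBmax : B < ρmax := max_lt h0 hminmax
  have hB0 : 0 ≤ B := hρmin0.le.trans hBmin
  have hψB : T₁ * B ^ 2 + T₂ * B + c ≤ B := by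
    nlinarith [hsum, hprod, mul_nonneg (sub_nonneg.mpr hBmin) (sub_nonneg.mpr hBmax.le)]
  have hbound : ∀ k, ζ k ≤ B := by
    intro k
    induction k with
    | zero => exact le_max_left _ _
    | succ n ih =>
      calc ζ (n + 1) ≤ T₁ * ζ n ^ 2 + T₂ * ζ n + c := hrec n
        _ ≤ T₁ * B ^ 2 + T₂ * B + c := hmono _ _ (hpos n) ih
        _ ≤ B := hψB
  set q : ℝ := T₁ * (B + ρmin) + T₂ with hqdef
  have hq0 : 0 ≤ q := by positivity
  have hq1 : q < 1 := by
    have hx : 0 < T₁ * (ρmax - B) := mul_pos hT₁ (sub_pos.mpr hBmax)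
    have he : q = 1 - T₁ * (ρmax - B) := by rw [hqdef]; linear_combination hsum
    linarith
  have hd : ∀ k, ζ k ≤ ρmin + q ^ k * (B - ρmin) := by
    intro k
    induction k with
    | zero => simpa using hbound 0
    | succ n ih =>
      have hqpow : (0:ℝ) ≤ q ^ n := pow_nonneg hq0 n
      rcases le_or_gt (ζ n) ρmin with h | h
      · have h1 : ζ (n + 1) ≤ ρmin := by
          calc ζ (n + 1) ≤ T₁ * ζ n ^ 2 + T₂ * ζ n + c := hrec n
            _ ≤ T₁ * ρmin ^ 2 + T₂ * ρmin + c := hmono _ _ (hpos n) h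
            _ = ρmin := hfix
        have h2 : (0:ℝ) ≤ q ^ (n+1) * (B - ρmin) :=
          mul_nonneg (pow_nonneg hq0 _) (by linarith)
        linarith
      · have keyeq : T₁ * ζ n ^ 2 + T₂ * ζ n + c =
            ρmin + (ζ n - ρmin) * q - T₁ * (ζ n - ρmin) * (B - ζ n) := by
          rw [hqdef]; linear_combination hfix
        have hnn : (0:ℝ) ≤ T₁ * (ζ n - ρmin) * (B - ζ n) :=
          mul_nonneg (mul_nonneg hT₁.le (by linarith)) (by linarith [hbound n])
        have key : T₁ * ζ n ^ 2 + T₂ * ζ n + c ≤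
            ρmin + (ζ n - ρmin) * q := by linarith [keyeq]
        have hstep : (ζ n - ρmin) * q ≤ q ^ n * (B - ρmin) * q := by
          apply mul_le_mul_of_nonneg_right _ hq0
          linarith [ih]
        calc ζ (n + 1) ≤ T₁ * ζ n ^ 2 + T₂ * ζ n + c := hrec n
          _ ≤ ρmin + (ζ n - ρmin) * q := key
          _ ≤ ρmin + q ^ n * (B - ρmin) * q := by linarith
          _ = ρmin + q ^ (n+1) * (B - ρmin) := by ring
  have htend : Filter.Tendsto (fun k => ρmin + q ^ k * (B - ρmin))
      Filter.atTop (nhds ρmin) := by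
    have h1 : Filter.Tendsto (fun k : ℕ => q ^ k) Filter.atTop (nhds 0) :=
      tendsto_pow_atTop_nhds_zero_of_lt_one hq0 hq1
    have h2 := (h1.mul_const (B - ρmin)).const_add ρmin
    simpa using h2
  calc Filter.limsup ζ Filter.atTop
      ≤ Filter.limsup (fun k => ρmin + q ^ k * (B - ρmin)) Filter.atTop := by
        refine Filter.limsup_le_limsup (Filter.Eventually.of_forall hd) ?_ ?_
        · exact Filter.IsBoundedUnder.isCoboundedUnder_le
            (Filter.isBoundedUnder_of (f := Filter.atTop) (u := ζ)
              (r := (· ≥ ·)) ⟨0, fun k => hpos k⟩)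
        · exact htend.isBoundedUnder_le
    _ = ρmin := htend.limsup_eq
end

section
/- Let I ≥ 1, m ≥ 1, c ≥ 0, and let P ∈ Matrix (Fin I) (Fin I) ℝ satisfy |P_{ij} − 1/I| ≤ c for all i, j. Let v : Fin I → ℝ^m be a family of vectors, set v̄ = (1/I)·Σ_{j} v_j, and define u_i = Σ_j P_{ij}·v_j for each i. Then √(Σ_i ‖u_i − v̄‖²) ≤ I·c·√(Σ_j ‖v_j‖²). -/
/-- a mixing matrix entrywise within c of the uniform averaging
matrix maps a stacked family of vectors to within I·c (in stacked Euclidean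
norm) of the exact average. -/
theorem near_averaging_matrix_bound {I m : ℕ} (hI : 1 ≤ I) (hm : 1 ≤ m)
    (c : ℝ) (hc : 0 ≤ c)
    (P : Matrix (Fin I) (Fin I) ℝ)
    (hP : ∀ i j, |P i j - 1 / I| ≤ c)
    (v : Fin I → EuclideanSpace ℝ (Fin m))
    (vbar : EuclideanSpace ℝ (Fin m)) (hvbar : vbar = (I : ℝ)⁻¹ • ∑ j, v j)
    (u : Fin I → EuclideanSpace ℝ (Fin m))
    (hu : ∀ i, u i = ∑ j, P i j • v j) :
    Real.sqrt (∑ i, ‖u i - vbar‖ ^ 2) ≤ I * c * Real.sqrt (∑ j, ‖v j‖ ^ 2) := by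
  set S : ℝ := ∑ j, ‖v j‖ ^ 2 with hS
  have hSnn : 0 ≤ S := Finset.sum_nonneg fun j _ => sq_nonneg _
  have hdiff : ∀ i, u i - vbar = ∑ j, (P i j - (I : ℝ)⁻¹) • v j := by
    intro i
    rw [hu, hvbar, Finset.smul_sum, ← Finset.sum_sub_distrib]
    congr 1; ext j; rw [sub_smul]
  have hQ : ∀ i j, |P i j - (I : ℝ)⁻¹| ≤ c := by
    intro i j
    have := hP i j
    rwa [one_div] at this
  -- bound each term
  have key : ∀ i : Fin I, ‖u i - vbar‖ ^ 2 ≤ (I : ℝ) * c ^ 2 * S := by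
    intro i
    have h1 : ‖u i - vbar‖ ≤ ∑ j, |P i j - (I : ℝ)⁻¹| * ‖v j‖ := by
      rw [hdiff i]
      refine (norm_sum_le _ _).trans ?_
      refine Finset.sum_le_sum fun j _ => ?_
      rw [norm_smul, Real.norm_eq_abs]
    have h2 : (∑ j, |P i j - (I : ℝ)⁻¹| * ‖v j‖) ^ 2 ≤
        (∑ j, |P i j - (I : ℝ)⁻¹| ^ 2) * S := by
      simpa [hS] using
        Finset.sum_mul_sq_le_sq_mul_sq Finset.univ
          (fun j => |P i j - (I : ℝ)⁻¹|) (fun j => ‖v j‖)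
    have h3 : (∑ j : Fin I, |P i j - (I : ℝ)⁻¹| ^ 2) ≤ (I : ℝ) * c ^ 2 := by
      calc (∑ j : Fin I, |P i j - (I : ℝ)⁻¹| ^ 2)
          ≤ ∑ j : Fin I, c ^ 2 := by
            refine Finset.sum_le_sum fun j _ => ?_
            exact pow_le_pow_left₀ (abs_nonneg _) (hQ i j) 2
        _ = (I : ℝ) * c ^ 2 := by simp [mul_comm]
    have hnn : 0 ≤ ∑ j, |P i j - (I : ℝ)⁻¹| * ‖v j‖ :=
      Finset.sum_nonneg fun j _ => mul_nonneg (abs_nonneg _) (norm_nonneg _)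
    calc ‖u i - vbar‖ ^ 2 ≤ (∑ j, |P i j - (I : ℝ)⁻¹| * ‖v j‖) ^ 2 :=
          pow_le_pow_left₀ (norm_nonneg _) h1 2
      _ ≤ (∑ j, |P i j - (I : ℝ)⁻¹| ^ 2) * S := h2
      _ ≤ (I : ℝ) * c ^ 2 * S := mul_le_mul_of_nonneg_right h3 hSnn
  have hsum : (∑ i, ‖u i - vbar‖ ^ 2) ≤ ((I : ℝ) * c) ^ 2 * S := by
    calc (∑ i, ‖u i - vbar‖ ^ 2) ≤ ∑ i : Fin I, (I : ℝ) * c ^ 2 * S :=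
          Finset.sum_le_sum fun i _ => key i
      _ = (I : ℝ) * ((I : ℝ) * c ^ 2 * S) := by simp [mul_comm]
      _ = ((I : ℝ) * c) ^ 2 * S := by ring
  calc Real.sqrt (∑ i, ‖u i - vbar‖ ^ 2) ≤ Real.sqrt (((I : ℝ) * c) ^ 2 * S) :=
        Real.sqrt_le_sqrt hsum
    _ = (I : ℝ) * c * Real.sqrt S := by
        rw [Real.sqrt_mul (sq_nonneg _), Real.sqrt_sq (by positivity)]
end

section
/- Let I ≥ 1, m ≥ 1, and let W : ℕ → Matrix (Fin I) (Fin I) ℝ be a sequence of doubly stochastic matrices. Let v⁰ : Fin I → ℝ^m and define recursively v^{ℓ+1}_i = Σ_j (W(ℓ))_{ij}·v^ℓ_j, and set v̄ = (1/I)·Σ_j v⁰_j. Suppose that for some ℓ ≥ 0 and c ≥ 0 the product P = W(ℓ)·W(ℓ−1)⋯W(0) satisfies |P_{ij} − 1/I| ≤ c for all i, j. Then: (a) the average is preserved, (1/I)·Σ_i v^{ℓ+1}_i = v̄; and (b) √(Σ_i ‖v^{ℓ+1}_i − v̄‖²) ≤ I·c·√(Σ_j ‖v⁰_j‖²). -/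
/-- Lemma 3 of the paper: gossip iterations with doubly
stochastic weights preserve the average, and the stacked deviation from the
average is controlled by the entrywise deviation of the weight-matrix product
from the uniform averaging matrix. -/
theorem gossip_error_bound {I m : ℕ} (hI : 1 ≤ I) (hm : 1 ≤ m)
    (W : ℕ → Matrix (Fin I) (Fin I) ℝ)
    (hds : ∀ ℓ, IsDoublyStochastic (W ℓ))
    (v : ℕ → Fin I → EuclideanSpace ℝ (Fin m))
    (hrec : ∀ ℓ i, v (ℓ + 1) i = ∑ j, W ℓ i j • v ℓ j)
    (vbar : EuclideanSpace ℝ (Fin m)) (hvbar : vbar = (I : ℝ)⁻¹ • ∑ j, v 0 j)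
    (ℓ : ℕ) (c : ℝ) (hc : 0 ≤ c)
    (hP : ∀ i j, |gossipProd W ℓ i j - 1 / I| ≤ c) :
    ((I : ℝ)⁻¹ • ∑ i, v (ℓ + 1) i = vbar) ∧
      Real.sqrt (∑ i, ‖v (ℓ + 1) i - vbar‖ ^ 2) ≤
        I * c * Real.sqrt (∑ j, ‖v 0 j‖ ^ 2) := by
  have hI0 : (I : ℝ) ≠ 0 := by
    exact_mod_cast Nat.one_le_iff_ne_zero.mp hI
  have hvPgen : ∀ L i, v (L + 1) i = ∑ j, gossipProd W L i j • v 0 j := by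
    intro L
    induction L with
    | zero => intro i; simpa [gossipProd] using hrec 0 i
    | succ n ih =>
      intro i
      rw [hrec]
      simp only [ih]
      show _ = ∑ j, (W (n+1) * gossipProd W n) i j • v 0 j
      simp only [Matrix.mul_apply, Finset.smul_sum, smul_smul, Finset.sum_smul]
      rw [Finset.sum_comm]
  have hcol : ∀ L j, ∑ i, gossipProd W L i j = 1 := by
    intro L
    induction L with
    | zero => exact (hds 0).2.2
    | succ n ih =>
      intro j
      show ∑ i, (W (n+1) * gossipProd W n) i j = 1
      simp only [Matrix.mul_apply]
      rw [Finset.sum_comm]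
      calc ∑ k, ∑ i, W (n+1) i k * gossipProd W n k j
          = ∑ k, (∑ i, W (n+1) i k) * gossipProd W n k j := by
            simp [Finset.sum_mul]
        _ = ∑ k, gossipProd W n k j := by simp [(hds (n+1)).2.2]
        _ = 1 := ih j
  have hsum : ∑ i, v (ℓ + 1) i = ∑ j, v 0 j := by
    simp only [hvPgen]
    rw [Finset.sum_comm]
    refine Finset.sum_congr rfl fun j _ => ?_
    rw [← Finset.sum_smul, hcol, one_smul]
  have hdev : ∀ i, v (ℓ + 1) i - vbar = ∑ j, (gossipProd W ℓ i j - 1 / I) • v 0 j := by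
    intro i
    rw [hvPgen, hvbar, Finset.smul_sum, ← Finset.sum_sub_distrib]
    refine Finset.sum_congr rfl fun j _ => ?_
    rw [sub_smul, one_div]
  have hbound : ∀ i, ‖v (ℓ + 1) i - vbar‖ ≤ c * ∑ j, ‖v 0 j‖ := by
    intro i
    rw [hdev i]
    calc ‖∑ j, (gossipProd W ℓ i j - 1 / I) • v 0 j‖
        ≤ ∑ j, ‖(gossipProd W ℓ i j - 1 / I) • v 0 j‖ := norm_sum_le _ _
      _ = ∑ j, |gossipProd W ℓ i j - 1 / I| * ‖v 0 j‖ := by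
          simp [norm_smul, Real.norm_eq_abs]
      _ ≤ ∑ j, c * ‖v 0 j‖ :=
          Finset.sum_le_sum fun j _ =>
            mul_le_mul_of_nonneg_right (hP i j) (norm_nonneg _)
      _ = c * ∑ j, ‖v 0 j‖ := by rw [Finset.mul_sum]
  have hCS : (∑ j, ‖v 0 j‖) ^ 2 ≤ (I : ℝ) * ∑ j, ‖v 0 j‖ ^ 2 := by
    simpa using sq_sum_le_card_mul_sum_sq (s := Finset.univ) (f := fun j => ‖v 0 j‖)
  have key : ∑ i, ‖v (ℓ + 1) i - vbar‖ ^ 2 ≤ ((I : ℝ) * c) ^ 2 * ∑ j, ‖v 0 j‖ ^ 2 := by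
    have h1 : ∑ i, ‖v (ℓ + 1) i - vbar‖ ^ 2 ≤ ∑ _i : Fin I, (c * ∑ j, ‖v 0 j‖) ^ 2 :=
      Finset.sum_le_sum fun i _ => pow_le_pow_left₀ (norm_nonneg _) (hbound i) 2
    have h2 : ∑ _i : Fin I, (c * ∑ j, ‖v 0 j‖) ^ 2 = (I : ℝ) * (c * ∑ j, ‖v 0 j‖) ^ 2 := by
      simp [Finset.sum_const, nsmul_eq_mul]
    have hIpos : (0:ℝ) < I := by exact_mod_cast hI
    nlinarith [h1, h2, hCS, sq_nonneg c, mul_pos hIpos hIpos]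
  constructor
  · rw [hsum, hvbar]
  · calc Real.sqrt (∑ i, ‖v (ℓ + 1) i - vbar‖ ^ 2)
        ≤ Real.sqrt (((I : ℝ) * c) ^ 2 * ∑ j, ‖v 0 j‖ ^ 2) := Real.sqrt_le_sqrt key
      _ = (I : ℝ) * c * Real.sqrt (∑ j, ‖v 0 j‖ ^ 2) := by
          rw [Real.sqrt_mul (by positivity), Real.sqrt_sq (by positivity)]
end
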